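/- Let m ≥ 1 and n_c ≥ 5 be integers and suppose θ ∈ ℝ^{m(n_c−1)+1} satisfies conditions (C1)–(C2) with integer vector k = (k_0, ..., k_{m−1}). Then for every p ∈ {0, ..., m−1}, the winding number of θ along the p-th basis cycle σ_p of the 1D honeycomb graph G(m, n_c) equals k_p. In particular the winding vector of θ is exactly (k_0, ..., k_{m−1}). -/

import Mathlib

/-- The counterclockwise difference: the unique element of `[-π, π)` congruent to `x`
modulo `2π`. -/
noncomputable def dcc (x : ℝ) : ℝ :=
  x - 2 * Real.pi * ((⌊(x + Real.pi) / (2 * Real.pi)⌋ : ℤ) : ℝ)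

/-- Conditions (C1)–(C2). -/
def satisfiesC (m nc : ℕ) (θ : ℕ → ℝ) (k : ℕ → ℤ) : Prop :=
  (∀ p, p < m → |k p| ≤ ⌈(nc : ℚ) / 4⌉ - 1) ∧
  (∀ p, p < m → ∀ i, p * (nc - 1) + 1 ≤ i → i ≤ (p + 1) * (nc - 1) →
    θ (i + 1) - θ i = 2 * Real.pi * (k p : ℝ) / (nc : ℝ))

/-- The winding number of `θ` along the `p`-th basis cycle of the 1D honeycomb graph:
the cycle visits `p(n_c-1)+1, ..., (p+1)(n_c-1)+1` along path edges and returns along the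
chord edge. -/
noncomputable def windingP (nc : ℕ) (θ : ℕ → ℝ) (p : ℕ) : ℝ :=
  (1 / (2 * Real.pi)) *
    ((∑ j ∈ Finset.range (nc - 1),
        dcc (θ (p * (nc - 1) + 1 + j + 1) - θ (p * (nc - 1) + 1 + j))) +
      dcc (θ (p * (nc - 1) + 1) - θ ((p + 1) * (nc - 1) + 1)))

/-!
Along the `p`-th basis cycle every path edge has the increment `c = 2π k_p / n_c`, which lies
in `[-π, π)` because `4 |k_p| < n_c`, so `dcc` leaves it unchanged. The chord edge closes the
cycle with increment `-(n_c - 1) c = c - 2π k_p`, whose `dcc` is therefore `c` as well. Summing,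
the winding number is `n_c c / 2π = k_p`.
-/

open Real

theorem dcc_add_two_pi_mul_intCast {y : ℝ} (hy : y ∈ Set.Ico (-π) π) (q : ℤ) :
    dcc (y + 2 * π * q) = y := by
  have h2pi : 0 < 2 * π := by positivity
  have hfloor : ⌊(y + 2 * π * q + π) / (2 * π)⌋ = q := by
    rw [Int.floor_eq_iff, le_div_iff₀ h2pi, div_lt_iff₀ h2pi]
    constructor <;> nlinarith [hy.1, hy.2]
  rw [dcc, hfloor]
  ring

theorem dcc_eq_self {y : ℝ} (hy : y ∈ Set.Ico (-π) π) : dcc y = y := by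
  simpa using dcc_add_two_pi_mul_intCast hy 0

theorem four_mul_abs_lt_of_abs_le_ceil_sub_one {k : ℤ} {n : ℕ}
    (hk : |k| ≤ ⌈(n : ℚ) / 4⌉ - 1) : 4 * |k| < n := by
  have hceil := Int.ceil_lt_add_one ((n : ℚ) / 4)
  have hkQ : ((|k| : ℤ) : ℚ) ≤ ⌈(n : ℚ) / 4⌉ - 1 := by exact_mod_cast hk
  exact_mod_cast (by linarith : (4 * ((|k| : ℤ) : ℚ)) < n)

theorem two_pi_mul_div_mem_Ico {k : ℤ} {n : ℕ} (hk : 4 * |k| < n) :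
    2 * π * k / n ∈ Set.Ico (-π) π := by
  have hkR : 4 * |(k : ℝ)| < n := by exact_mod_cast hk
  obtain ⟨hlow, hhigh⟩ := abs_lt.1 (show |(k : ℝ)| < n / 4 by linarith)
  have hn : (0 : ℝ) < n := by linarith [abs_nonneg (k : ℝ)]
  rw [Set.mem_Ico, le_div_iff₀ hn, div_lt_iff₀ hn]
  constructor <;> nlinarith [pi_pos]

theorem sub_eq_mul_of_forall_succ_sub_eq {θ : ℕ → ℝ} {a L : ℕ} {c : ℝ}
    (h : ∀ j < L, θ (a + j + 1) - θ (a + j) = c) : θ (a + L) - θ a = L * c := by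
  induction L with
  | zero => simp
  | succ L ih =>
    have hlast := h L L.lt_succ_self
    have hprev := ih fun j hj => h j (by omega)
    rw [← add_assoc]
    push_cast
    linarith

theorem windingP_eq_of_forall_step {nc p : ℕ} {θ : ℕ → ℝ} {k : ℤ} (hk : 4 * |k| < nc)
    (hstep : ∀ i, p * (nc - 1) + 1 ≤ i → i ≤ (p + 1) * (nc - 1) →
      θ (i + 1) - θ i = 2 * π * k / nc) :
    windingP nc θ p = k := by
  have hnc : 1 ≤ nc := by have := abs_nonneg k; omega
  set a := p * (nc - 1) + 1
  set c := 2 * π * k / nc with hc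
  have hc_mem : c ∈ Set.Ico (-π) π := two_pi_mul_div_mem_Ico hk
  have hend : (p + 1) * (nc - 1) + 1 = a + (nc - 1) := by rw [add_mul]; omega
  have hpath : ∀ j < nc - 1, θ (a + j + 1) - θ (a + j) = c := fun j hj =>
    hstep _ (by omega) (by rw [add_mul]; omega)
  have hncc : (nc : ℝ) * c = 2 * π * k := by
    rw [hc]; field_simp
  have hchord : θ a - θ (a + (nc - 1)) = c + 2 * π * (-k : ℤ) := by
    have htel := sub_eq_mul_of_forall_succ_sub_eq hpath
    push_cast [Nat.cast_sub hnc] at htel ⊢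
    linarith
  rw [windingP, hend, hchord, dcc_add_two_pi_mul_intCast hc_mem,
    Finset.sum_congr rfl fun j hj => by rw [hpath j (Finset.mem_range.1 hj), dcc_eq_self hc_mem],
    Finset.sum_const, Finset.card_range, nsmul_eq_mul, Nat.cast_sub hnc, Nat.cast_one]
  field_simp
  linarith

theorem winding_vector_of_satisfiesC_general (m nc : ℕ)
    (θ : ℕ → ℝ) (k : ℕ → ℤ) (hC : satisfiesC m nc θ k) :
    ∀ p, p < m → windingP nc θ p = (k p : ℝ) := fun p hp =>
  windingP_eq_of_forall_step (four_mul_abs_lt_of_abs_le_ceil_sub_one (hC.1 p hp)) (hC.2 p hp)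

/-- if `θ` satisfies (C1)–(C2) with integer vector `k`, then for every
`p < m` the winding number of `θ` along the `p`-th basis cycle equals `k_p`; in
particular the winding vector of `θ` is exactly `(k_0, ..., k_{m-1})`. -/
theorem winding_vector_of_satisfiesC (m nc : ℕ) (hm : 1 ≤ m) (hnc : 5 ≤ nc)
    (θ : ℕ → ℝ) (k : ℕ → ℤ) (hC : satisfiesC m nc θ k) :
    ∀ p, p < m → windingP nc θ p = (k p : ℝ) :=
  winding_vector_of_satisfiesC_general m nc θ k hC
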